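/- Let $\chi$ be a Dirichlet character of modulus $N$ and let $r,s$ be coprime positive integers with $N \mid rs$ and $v_2(rs) \neq 1$. Write $\chi = \chi_r\chi_s$ with moduli $(N,r)$ and $(N,s)$ respectively, and let $\bar r r + \bar s s = 1$. Then for all integers $m,n$: $S(m,n;rs;\chi) = S(m\bar s, n\bar s; r; \chi_r)\, S(m\bar r, n\bar r; s; \chi_s)$. -/

import Mathlib

open scoped BigOperators

/-- `e(x) = exp(2πix)`. -/
noncomputable def eFun (x : ℝ) : ℂ := Complex.exp (2 * Real.pi * Complex.I * x)

/-- `ε_d`: `1` if `d ≡ 1 (mod 4)`, `i` if `d ≡ 3 (mod 4)`. -/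
noncomputable def epsFactor (d : ℤ) : ℂ := if d % 4 = 1 then 1 else Complex.I

/-- The Kronecker symbol `(a | 2)`. -/
def kron2 (a : ℤ) : ℤ :=
  if a % 2 = 0 then 0 else if a % 8 = 1 ∨ a % 8 = 7 then 1 else -1

/-- The extended Kronecker symbol `(a | n)`. -/
def kroneckerSym (a n : ℤ) : ℤ :=
  if n = 0 then (if a = 1 ∨ a = -1 then 1 else 0)
  else
    (if n < 0 ∧ a < 0 then -1 else 1) *
      kron2 a ^ (n.natAbs.factorization 2) *
      jacobiSym a (n.natAbs / 2 ^ (n.natAbs.factorization 2))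

/-- The half-integral weight Kloosterman sum
`K_ℓ(m,n;c;χ) = ∑_{ad ≡ 1 (c)} ε_d^ℓ conj(χ(d)) (c|d) e((ma+nd)/c)`. -/
noncomputable def Ksum (ℓ m n : ℤ) (c : ℕ) [NeZero c] {N : ℕ}
    (χ : DirichletCharacter ℂ N) : ℂ :=
  ∑ d : (ZMod c)ˣ,
    epsFactor ((d : ZMod c).val : ℤ) ^ ℓ *
      (starRingEnd ℂ) (χ (((d : ZMod c).val : ℕ) : ZMod N)) *
      (kroneckerSym (c : ℤ) ((d : ZMod c).val : ℤ) : ℂ) *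
      eFun (((m * (((d⁻¹ : (ZMod c)ˣ) : ZMod c).val : ℤ) +
              n * ((d : ZMod c).val : ℤ) : ℤ) : ℝ) / (c : ℝ))

/-- The Dirichlet-twisted Salié sum
`S(m,n;c;χ) = ∑_{ad ≡ 1 (c)} conj(χ(d)) (d|c) e((ma+nd)/c)`. -/
noncomputable def Ssum (m n : ℤ) (c : ℕ) [NeZero c] {N : ℕ}
    (χ : DirichletCharacter ℂ N) : ℂ :=
  ∑ d : (ZMod c)ˣ,
    (starRingEnd ℂ) (χ (((d : ZMod c).val : ℕ) : ZMod N)) *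
      (kroneckerSym ((d : ZMod c).val : ℤ) (c : ℤ) : ℂ) *
      eFun (((m * (((d⁻¹ : (ZMod c)ˣ) : ZMod c).val : ℤ) +
              n * ((d : ZMod c).val : ℤ) : ℤ) : ℝ) / (c : ℝ))

/-!
The Chinese remainder theorem identifies `(ℤ/rsℤ)ˣ` with `(ℤ/rℤ)ˣ × (ℤ/sℤ)ˣ`, and the summand
of `S(m,n;rs;χ)` factors along it: `χ(d) = χ_r(d) χ_s(d)` by hypothesis,
`e(x/rs) = e(s̄x/r) e(r̄x/s)` because `1 = r̄r + s̄s`, and `(d|rs) = (d|r)(d|s)` with each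
factor depending only on `d` modulo its modulus. This last point is where `v₂(rs) ≠ 1` enters:
the symbol `(d|2^k)` is `(d|2)^k`, which is determined by `d mod 2^k` for `k ≠ 1` but needs
`d mod 8` for `k = 1`.
-/

lemma eFun_add (x y : ℝ) : eFun (x + y) = eFun x * eFun y := by
  simp [eFun, mul_add, Complex.exp_add]

lemma eFun_intCast (k : ℤ) : eFun k = 1 := by
  rw [eFun, show (2 : ℂ) * Real.pi * Complex.I * ((k : ℝ) : ℂ) = k * (2 * Real.pi * Complex.I) by
    push_cast; ring, Complex.exp_int_mul_two_pi_mul_I]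

lemma eFun_intCast_div_of_modEq {c : ℕ} {x y : ℤ} (h : x ≡ y [ZMOD c]) :
    eFun ((x : ℝ) / c) = eFun ((y : ℝ) / c) := by
  obtain rfl | hc := eq_or_ne c 0
  · rw [Nat.cast_zero, Int.modEq_zero_iff] at h
    rw [h]
  obtain ⟨k, hk⟩ := h.dvd
  have hy : (y : ℝ) / c = x / c + k := by
    rw [show y = x + c * k by omega]
    push_cast
    field_simp
  rw [hy, eFun_add, eFun_intCast, mul_one]

/-- Partial fractions: `1 / (r s) = s̄ / r + r̄ / s`. -/
lemma eFun_intCast_div_mul_of_bezout {r s : ℕ} (hr : r ≠ 0) (hs : s ≠ 0) {rb sb : ℤ}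
    (hbez : rb * r + sb * s = 1) (x : ℤ) :
    eFun ((x : ℝ) / (r * s : ℕ)) =
      eFun (((sb * x : ℤ) : ℝ) / r) * eFun (((rb * x : ℤ) : ℝ) / s) := by
  have hbez' : (rb : ℝ) * r + sb * s = 1 := by exact_mod_cast hbez
  rw [← eFun_add]
  congr 1
  push_cast
  field_simp
  linear_combination (-x : ℝ) * hbez'

lemma kron2_eq_of_modEq_eight {a b : ℤ} (h : a ≡ b [ZMOD 8]) : kron2 a = kron2 b := by
  have h2 : a % 2 = b % 2 := by unfold Int.ModEq at h; omega
  unfold kron2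
  rw [h, h2]

lemma kron2_sq_eq_of_modEq_two {a b : ℤ} (h : a ≡ b [ZMOD 2]) : kron2 a ^ 2 = kron2 b ^ 2 := by
  unfold kron2
  rw [h]
  split_ifs <;> norm_num

lemma kron2_pow_eq_of_modEq {a b : ℤ} {k : ℕ} (hk : k ≠ 1) (h : a ≡ b [ZMOD 2 ^ k]) :
    kron2 a ^ k = kron2 b ^ k := by
  rcases Nat.lt_or_ge k 3 with hk3 | hk3
  · interval_cases k
    · rw [pow_zero, pow_zero]
    · exact absurd rfl hk
    · exact kron2_sq_eq_of_modEq_two (h.of_dvd (by norm_num))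
  · rw [kron2_eq_of_modEq_eight (h.of_dvd (by exact_mod_cast Nat.pow_dvd_pow 2 hk3))]

lemma kroneckerSym_natCast_right (a : ℤ) {c : ℕ} (hc : c ≠ 0) :
    kroneckerSym a c = kron2 a ^ c.factorization 2 * jacobiSym a (ordCompl[2] c) := by
  rw [kroneckerSym, if_neg (by exact_mod_cast hc), if_neg (by omega), Int.natAbs_natCast, one_mul]

lemma kroneckerSym_natCast_mul_right (a : ℤ) {r s : ℕ} (hr : r ≠ 0) (hs : s ≠ 0) :
    kroneckerSym a (r * s : ℕ) = kroneckerSym a r * kroneckerSym a s := by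
  rw [kroneckerSym_natCast_right a hr, kroneckerSym_natCast_right a hs,
    kroneckerSym_natCast_right a (mul_ne_zero hr hs), Nat.ordCompl_mul,
    Nat.factorization_mul hr hs, Finsupp.add_apply, pow_add,
    jacobiSym.mul_right' a (Nat.ordCompl_pos 2 hr).ne' (Nat.ordCompl_pos 2 hs).ne']
  ring

lemma kroneckerSym_eq_of_modEq {a b : ℤ} {c : ℕ} (hv : c.factorization 2 ≠ 1)
    (h : a ≡ b [ZMOD c]) : kroneckerSym a c = kroneckerSym b c := by
  obtain rfl | hc := eq_or_ne c 0
  · rw [Nat.cast_zero, Int.modEq_zero_iff] at h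
    rw [h]
  rw [kroneckerSym_natCast_right a hc, kroneckerSym_natCast_right b hc,
    kron2_pow_eq_of_modEq hv (h.of_dvd (by exact_mod_cast Nat.ordProj_dvd c 2)),
    jacobiSym.mod_left' (h.of_dvd (by exact_mod_cast Nat.ordCompl_dvd c 2))]

lemma Nat.Coprime.factorization_ne_of_mul_ne {r s p k : ℕ} (hrs : r.Coprime s) (hk : k ≠ 0)
    (h : (r * s).factorization p ≠ k) : r.factorization p ≠ k := by
  intro hr
  have hpr : p ∣ r := Nat.dvd_of_factorization_pos (hr ▸ hk)
  have hps : ¬ p ∣ s := fun hps => by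
    have hp1 : p = 1 := Nat.eq_one_of_dvd_one (hrs.gcd_eq_one ▸ Nat.dvd_gcd hpr hps)
    rw [hp1, Nat.factorization_one_right] at hr
    exact hk hr.symm
  rw [Nat.factorization_mul_of_coprime hrs, Finsupp.add_apply, hr,
    Nat.factorization_eq_zero_of_not_dvd hps] at h
  exact h rfl

noncomputable def ZMod.unitsChineseRemainder {r s : ℕ} (hrs : r.Coprime s) :
    (ZMod (r * s))ˣ ≃* (ZMod r)ˣ × (ZMod s)ˣ :=
  (Units.mapEquiv (ZMod.chineseRemainder hrs).toMulEquiv).trans MulEquiv.prodUnits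

section unitsChineseRemainder

variable {r s : ℕ} [NeZero r] [NeZero s] (hrs : r.Coprime s) (d : (ZMod (r * s))ˣ)

lemma ZMod.val_unitsChineseRemainder_fst :
    ((unitsChineseRemainder hrs d).1 : ZMod r).val = (d : ZMod (r * s)).val % r := by
  change (ZMod.cast (d : ZMod (r * s)) : ZMod r × ZMod s).1.val = _
  rw [← ZMod.natCast_val, Prod.fst_natCast, ZMod.val_natCast]

lemma ZMod.val_unitsChineseRemainder_snd :
    ((unitsChineseRemainder hrs d).2 : ZMod s).val = (d : ZMod (r * s)).val % s := by
  change (ZMod.cast (d : ZMod (r * s)) : ZMod r × ZMod s).2.val = _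
  rw [← ZMod.natCast_val, Prod.snd_natCast, ZMod.val_natCast]

end unitsChineseRemainder

/-- The summand of `Ssum`; `a` stands for a representative of the inverse of `d` modulo `c`. -/
noncomputable def salieTerm (m n : ℤ) (c : ℕ) {N : ℕ} (χ : DirichletCharacter ℂ N) (d a : ℕ) :
    ℂ :=
  (starRingEnd ℂ) (χ (d : ZMod N)) * (kroneckerSym (d : ℤ) (c : ℤ) : ℂ) *
    eFun (((m * (a : ℤ) + n * (d : ℤ) : ℤ) : ℝ) / (c : ℝ))

lemma Ssum_eq_sum_salieTerm (m n : ℤ) (c : ℕ) [NeZero c] {N : ℕ} (χ : DirichletCharacter ℂ N) :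
    Ssum m n c χ =
      ∑ d : (ZMod c)ˣ, salieTerm m n c χ (d : ZMod c).val ((d⁻¹ : (ZMod c)ˣ) : ZMod c).val :=
  rfl

lemma ZMod.natCast_mod_of_dvd {k r : ℕ} (hkr : k ∣ r) (d : ℕ) : ((d % r : ℕ) : ZMod k) = d :=
  (ZMod.natCast_eq_natCast_iff _ _ _).2 ((Nat.mod_modEq d r).of_dvd hkr)

lemma salieTerm_mul {N r s : ℕ} (hr : r ≠ 0) (hs : s ≠ 0)
    (hvr : r.factorization 2 ≠ 1) (hvs : s.factorization 2 ≠ 1) {χ : DirichletCharacter ℂ N}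
    {χr : DirichletCharacter ℂ (N.gcd r)} {χs : DirichletCharacter ℂ (N.gcd s)}
    (hfac : ∀ d : ℤ, χ (d : ZMod N) = χr (d : ZMod (N.gcd r)) * χs (d : ZMod (N.gcd s)))
    {rb sb : ℤ} (hbez : rb * r + sb * s = 1) (m n : ℤ) (d a : ℕ) :
    salieTerm m n (r * s) χ d a =
      salieTerm (m * sb) (n * sb) r χr (d % r) (a % r) *
        salieTerm (m * rb) (n * rb) s χs (d % s) (a % s) := by
  have hχ : χ d = χr (d % r : ℕ) * χs (d % s : ℕ) := by
    rw [ZMod.natCast_mod_of_dvd (Nat.gcd_dvd_right N r),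
      ZMod.natCast_mod_of_dvd (Nat.gcd_dvd_right N s)]
    exact_mod_cast hfac d
  have hmod : ∀ q : ℕ, ((d % q : ℕ) : ℤ) ≡ d [ZMOD q] := fun q =>
    Int.natCast_modEq_iff.2 (Nat.mod_modEq d q)
  have hK : kroneckerSym d (r * s : ℕ) =
      kroneckerSym (d % r : ℕ) r * kroneckerSym (d % s : ℕ) s := by
    rw [kroneckerSym_natCast_mul_right _ hr hs, kroneckerSym_eq_of_modEq hvr (hmod r),
      kroneckerSym_eq_of_modEq hvs (hmod s)]
  have hphase : ∀ (q : ℕ) (u : ℤ),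
      u * (m * a + n * d) ≡ m * u * (a % q : ℕ) + n * u * (d % q : ℕ) [ZMOD q] := fun q u =>
    calc u * (m * a + n * d) = m * u * a + n * u * d := by ring
      _ ≡ m * u * (a % q : ℕ) + n * u * (d % q : ℕ) [ZMOD q] :=
        (((Int.natCast_modEq_iff.2 (Nat.mod_modEq a q)).symm.mul_left _).add
          ((hmod q).symm.mul_left _))
  unfold salieTerm
  rw [hχ, hK, eFun_intCast_div_mul_of_bezout hr hs hbez,
    eFun_intCast_div_of_modEq (hphase r sb), eFun_intCast_div_of_modEq (hphase s rb), map_mul]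
  push_cast
  ring

theorem stmt_8_general {N : ℕ} (χ : DirichletCharacter ℂ N)
    (r s : ℕ) [NeZero r] [NeZero s] (hrs : Nat.Coprime r s)
    (hv2 : (r * s).factorization 2 ≠ 1)
    (χr : DirichletCharacter ℂ (N.gcd r)) (χs : DirichletCharacter ℂ (N.gcd s))
    (hfac : ∀ d : ℤ, χ (d : ZMod N) = χr (d : ZMod (N.gcd r)) * χs (d : ZMod (N.gcd s)))
    (rb sb : ℤ) (hbez : rb * r + sb * s = 1) (m n : ℤ) :
    Ssum m n (r * s) χ = Ssum (m * sb) (n * sb) r χr * Ssum (m * rb) (n * rb) s χs := by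
  have hvr := hrs.factorization_ne_of_mul_ne one_ne_zero hv2
  have hvs := hrs.symm.factorization_ne_of_mul_ne one_ne_zero (mul_comm r s ▸ hv2)
  rw [Ssum_eq_sum_salieTerm, Ssum_eq_sum_salieTerm, Ssum_eq_sum_salieTerm, Fintype.sum_mul_sum,
    ← Fintype.sum_prod_type']
  refine Fintype.sum_equiv (ZMod.unitsChineseRemainder hrs).toEquiv _ _ fun d => ?_
  simp only [MulEquiv.toEquiv_eq_coe, MulEquiv.coe_toEquiv, ← Prod.fst_inv, ← Prod.snd_inv,
    ← map_inv, ZMod.val_unitsChineseRemainder_fst, ZMod.val_unitsChineseRemainder_snd]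
  exact salieTerm_mul (NeZero.ne r) (NeZero.ne s) hvr hvs hfac hbez m n _ _

/-- Twisted multiplicativity of Salié sums: for `r, s` coprime with `N ∣ rs` and
`v₂(rs) ≠ 1`, and `χ = χ_r χ_s`, `r̄r + s̄s = 1`,
`S(m,n;rs;χ) = S(ms̄, ns̄; r; χ_r) S(mr̄, nr̄; s; χ_s)`. -/
theorem stmt_8 {N : ℕ} (χ : DirichletCharacter ℂ N)
    (r s : ℕ) [NeZero r] [NeZero s] (hrs : Nat.Coprime r s)
    (hN : N ∣ r * s) (hv2 : (r * s).factorization 2 ≠ 1)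
    (χr : DirichletCharacter ℂ (N.gcd r)) (χs : DirichletCharacter ℂ (N.gcd s))
    (hfac : ∀ d : ℤ, χ (d : ZMod N) = χr (d : ZMod (N.gcd r)) * χs (d : ZMod (N.gcd s)))
    (rb sb : ℤ) (hbez : rb * r + sb * s = 1) (m n : ℤ) :
    Ssum m n (r * s) χ = Ssum (m * sb) (n * sb) r χr * Ssum (m * rb) (n * rb) s χs :=
  stmt_8_general χ r s hrs hv2 χr χs hfac rb sb hbez m n
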